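/- Let m be an odd positive integer. For every C ∈ R, the number of quadruples (X,Y,Z,W) ∈ 𝒯⁴ with X + Y − Z − W = C equals (2^{m+1} − 1)·2^m if C = 0; equals (2^m − 1)·2^m if C ∈ 2R and C ≠ 0; and equals 2^{2m} if C ∉ 2R. -/

import Mathlib

open Polynomial
open scoped Classical

/-!
The Teichmüller set is the image of a multiplicative section `T` of the residue map `R → 𝔽_q`
(`T a` is `x ^ q` for any lift `x` of `a`), and every element of `R` is uniquely `T a + 2 T b`.
Squaring `T a + T b ≡ T (a + b) mod 2R` gives the carry rule
`T (a²) + T (b²) = T ((a + b)²) + 2 T (a b)`, hence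
`T (x²) + T (y²) - T (z²) - T (w²) = T (s²) + 2 T (Q x y z w)` with `s = x + y + z + w` and an
explicit quadratic form `Q`. Writing `C = T (c²) + 2 T b`, the count is therefore the number of
points of `{s = c, Q = b}` in `𝔽_q⁴`.
For `c ≠ 0` the equation `Q = b` is linear in one coordinate once `x + y` and `x + z` are fixed,
giving `q²` points; for `c = 0` it collapses to `t² + s t = b` in two variables (with a free third
one), which has `2q - 1` solutions if `b = 0` and `q - 1` otherwise.
-/

lemma card_quadruple_subtype_eq {α β : Type*} {P : β → Prop} (e : α ≃ {b // P b})
    (Q : β → β → β → β → Prop) :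
    Nat.card {t : β × β × β × β // P t.1 ∧ P t.2.1 ∧ P t.2.2.1 ∧ P t.2.2.2 ∧
      Q t.1 t.2.1 t.2.2.1 t.2.2.2} =
      Nat.card {v : α × α × α × α // Q (e v.1) (e v.2.1) (e v.2.2.1) (e v.2.2.2)} :=
  Nat.card_congr
    { toFun t := ⟨(e.symm ⟨_, t.2.1⟩, e.symm ⟨_, t.2.2.1⟩, e.symm ⟨_, t.2.2.2.1⟩,
        e.symm ⟨_, t.2.2.2.2.1⟩), by simpa using t.2.2.2.2.2⟩
      invFun v := ⟨(e v.1.1, e v.1.2.1, e v.1.2.2.1, e v.1.2.2.2),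
        (e _).2, (e _).2, (e _).2, (e _).2, v.2⟩
      left_inv t := by simp
      right_inv v := by simp }

lemma card_sq_add_mul_eq {K : Type*} [Field K] [Fintype K] (b : K) :
    Nat.card {p : K × K // p.1 ^ 2 + p.2 * p.1 = b} =
      (if b = 0 then Fintype.card K else 0) + (Fintype.card K - 1) := by
  rw [Nat.card_congr (Equiv.subtypeProdEquivSigmaSubtype fun t s ↦ t ^ 2 + s * t = b),
    Nat.card_sigma, ← Finset.add_sum_erase _ _ (Finset.mem_univ 0)]
  congr 1
  · split_ifs with hb
    · simp [hb, Nat.card_eq_fintype_card]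
    · simp [Ne.symm hb]
  · have hunique : ∀ t ∈ Finset.univ.erase (0 : K), Nat.card {s // t ^ 2 + s * t = b} = 1 := by
      intro t ht
      have ht0 : t ≠ 0 := Finset.ne_of_mem_erase ht
      refine Nat.card_eq_one_iff_exists.2 ⟨⟨(b - t ^ 2) / t, by field_simp; ring⟩, ?_⟩
      rintro ⟨s, hs⟩
      ext
      field_simp
      linear_combination hs
    rw [Finset.sum_congr rfl hunique, Finset.sum_const, smul_eq_mul, mul_one,
      Finset.card_erase_of_mem (Finset.mem_univ _), Finset.card_univ]

section CharTwo

variable {K : Type*} [Field K] [CharP K 2]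

def teichCarry (x y z w : K) : K := (x + y) * (z + w) + x * y + z * w + (z + w) ^ 2

lemma teichCarry_eq_of_sum_eq {x y z w c : K} (h : x + y + z + w = c) :
    teichCarry x y z w =
      c * x + (x + z) ^ 2 + (x + y) * (x + z) + c * (x + z) + c * (c + (x + y)) := by
  obtain rfl : w = c - x - y - z := by linear_combination h
  unfold teichCarry
  linear_combination
    (-2 * c * x - c * y - 2 * x * z - x ^ 2 - y * z - z ^ 2) * CharTwo.two_eq_zero (R := K)

variable [Fintype K]

lemma card_teichCarry_eq_of_sum_ne_zero {c : K} (hc : c ≠ 0) (b : K) :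
    Nat.card {v : K × K × K × K // v.1 + v.2.1 + v.2.2.1 + v.2.2.2 = c ∧
      teichCarry v.1 v.2.1 v.2.2.1 v.2.2.2 = b} = Fintype.card K * Fintype.card K := by
  let root (u s : K) : K := (b - u ^ 2 - s * u - c * u - c * (c + s)) / c
  have c_mul_root (u s : K) : c * root u s = b - u ^ 2 - s * u - c * u - c * (c + s) := by
    simp only [root]; field_simp
  let e : {v : K × K × K × K // v.1 + v.2.1 + v.2.2.1 + v.2.2.2 = c ∧
      teichCarry v.1 v.2.1 v.2.2.1 v.2.2.2 = b} ≃ K × K :=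
    { toFun v := (v.1.1 + v.1.2.2.1, v.1.1 + v.1.2.1)
      invFun p := ⟨(root p.1 p.2, p.2 - root p.1 p.2, p.1 - root p.1 p.2,
          c - p.1 - p.2 + root p.1 p.2), by
        have hsum : root p.1 p.2 + (p.2 - root p.1 p.2) + (p.1 - root p.1 p.2) +
            (c - p.1 - p.2 + root p.1 p.2) = c := by ring
        refine ⟨hsum, ?_⟩
        rw [teichCarry_eq_of_sum_eq hsum]
        linear_combination c_mul_root p.1 p.2⟩
      left_inv := by
        rintro ⟨⟨x, y, z, w⟩, hsum, hcarry⟩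
        rw [teichCarry_eq_of_sum_eq hsum] at hcarry
        have hx : root (x + z) (x + y) = x :=
          mul_left_cancel₀ hc (by linear_combination c_mul_root (x + z) (x + y) - hcarry)
        obtain rfl : w = c - x - y - z := by linear_combination hsum
        ext <;> simp only [hx] <;> ring
      right_inv := by
        rintro ⟨u, s⟩
        ext <;> simp only <;> ring }
  rw [Nat.card_congr e, Nat.card_prod, Nat.card_eq_fintype_card]

lemma card_teichCarry_eq_of_sum_eq_zero (b : K) :
    Nat.card {v : K × K × K × K // v.1 + v.2.1 + v.2.2.1 + v.2.2.2 = 0 ∧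
      teichCarry v.1 v.2.1 v.2.2.1 v.2.2.2 = b} =
      Nat.card {p : K × K // p.1 ^ 2 + p.2 * p.1 = b} * Fintype.card K := by
  let e : {v : K × K × K × K // v.1 + v.2.1 + v.2.2.1 + v.2.2.2 = 0 ∧
      teichCarry v.1 v.2.1 v.2.2.1 v.2.2.2 = b} ≃ {p : K × K // p.1 ^ 2 + p.2 * p.1 = b} × K :=
    { toFun v := (⟨(v.1.1 + v.1.2.2.1, v.1.1 + v.1.2.1), by
          obtain ⟨_, hsum, hcarry⟩ := v
          simpa [teichCarry_eq_of_sum_eq hsum] using hcarry⟩, v.1.2.2.1)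
      invFun p := ⟨(p.1.1.1 - p.2, p.1.1.2 - p.1.1.1 + p.2, p.2, -p.1.1.2 - p.2), by
        obtain ⟨⟨⟨u, s⟩, h⟩, z⟩ := p
        have hsum : u - z + (s - u + z) + z + (-s - z) = 0 := by ring
        refine ⟨hsum, ?_⟩
        rw [teichCarry_eq_of_sum_eq hsum]
        linear_combination h⟩
      left_inv := by
        rintro ⟨⟨x, y, z, w⟩, hsum, -⟩
        obtain rfl : w = -x - y - z := by linear_combination hsum
        ext <;> simp only <;> ring
      right_inv := by
        rintro ⟨⟨⟨u, s⟩, h⟩, z⟩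
        ext <;> simp only <;> ring }
  rw [Nat.card_congr e, Nat.card_prod, Nat.card_eq_fintype_card (α := K)]

end CharTwo

-- `R` plays the role of `GR(4, m)` and `K` of its residue field: the residue map `π` has kernel
-- `2R`, and `2R` is also the annihilator of `2`.
structure GaloisRingData (R K : Type*) [CommRing R] [Field K] where
  π : R →+* K
  π_surjective : Function.Surjective π
  π_eq_zero_iff (x : R) : π x = 0 ↔ ∃ y, x = 2 * y
  two_mul_eq_zero_iff (x : R) : 2 * x = 0 ↔ π x = 0

namespace GaloisRingData

variable {R K : Type*} [CommRing R] [Field K] (G : GaloisRingData R K)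

lemma π_two : G.π 2 = 0 := (G.π_eq_zero_iff 2).2 ⟨1, (mul_one 2).symm⟩

lemma four_eq_zero (G : GaloisRingData R K) : (4 : R) = 0 := by
  linear_combination (G.two_mul_eq_zero_iff 2).2 G.π_two

lemma charP_two (G : GaloisRingData R K) : CharP K 2 :=
  CharTwo.of_one_ne_zero_of_two_eq_zero one_ne_zero ((map_ofNat G.π 2).symm.trans G.π_two)

lemma two_mul_eq_of_π_eq {x y : R} (h : G.π x = G.π y) : 2 * x = 2 * y := by
  obtain ⟨t, ht⟩ := (G.π_eq_zero_iff (x - y)).1 (by rw [map_sub, h, sub_self])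
  linear_combination 2 * ht + t * G.four_eq_zero

lemma sq_eq_of_π_eq {x y : R} (h : G.π x = G.π y) : x ^ 2 = y ^ 2 := by
  obtain ⟨t, ht⟩ := (G.π_eq_zero_iff (x - y)).1 (by rw [map_sub, h, sub_self])
  obtain rfl : x = y + 2 * t := by linear_combination ht
  linear_combination (y * t + t ^ 2) * G.four_eq_zero

variable [Fintype K]

lemma pow_card_eq_of_π_eq {x y : R} (h : G.π x = G.π y) :
    x ^ Fintype.card K = y ^ Fintype.card K := by
  have := G.charP_two
  obtain ⟨e, he⟩ : 2 ∣ Fintype.card K :=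
    Nat.dvd_of_mod_eq_zero (FiniteField.even_card_of_char_two (ringChar.eq K 2))
  rw [he, pow_mul, pow_mul, G.sq_eq_of_π_eq h]

noncomputable def teich (a : K) : R := Function.surjInv G.π_surjective a ^ Fintype.card K

@[simp]
lemma π_teich (a : K) : G.π (G.teich a) = a := by
  rw [teich, map_pow, Function.surjInv_eq G.π_surjective, FiniteField.pow_card]

lemma teich_pow_card (a : K) : G.teich a ^ Fintype.card K = G.teich a :=
  G.pow_card_eq_of_π_eq (by rw [π_teich, Function.surjInv_eq G.π_surjective])

lemma teich_π {z : R} (hz : z ^ Fintype.card K = z) : G.teich (G.π z) = z := by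
  rw [teich, G.pow_card_eq_of_π_eq (Function.surjInv_eq G.π_surjective _), hz]

@[simps]
noncomputable def teichEquiv : K ≃ {z : R // z ^ Fintype.card K = z} where
  toFun a := ⟨G.teich a, G.teich_pow_card a⟩
  invFun z := G.π z
  left_inv := G.π_teich
  right_inv z := Subtype.ext (G.teich_π z.2)

lemma teich_mul (a b : K) : G.teich (a * b) = G.teich a * G.teich b := by
  conv_lhs => rw [← G.π_teich a, ← G.π_teich b, ← map_mul]
  exact G.teich_π (by rw [mul_pow, G.teich_pow_card, G.teich_pow_card])

lemma teich_zero : G.teich 0 = 0 := by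
  simpa using G.teich_π (zero_pow Fintype.card_ne_zero : (0 : R) ^ Fintype.card K = 0)

lemma two_mul_teich_add (a b : K) : 2 * G.teich (a + b) = 2 * G.teich a + 2 * G.teich b := by
  rw [← mul_add]
  exact G.two_mul_eq_of_π_eq (by simp)

lemma exists_eq_teich_add_two_mul_teich (x : R) : ∃ b, x = G.teich (G.π x) + 2 * G.teich b := by
  obtain ⟨t, ht⟩ := (G.π_eq_zero_iff (x - G.teich (G.π x))).1 (by simp)
  exact ⟨G.π t, by rw [G.two_mul_eq_of_π_eq (G.π_teich _)]; linear_combination ht⟩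

@[simp]
lemma π_teich_add_two_mul_teich (a b : K) : G.π (G.teich a + 2 * G.teich b) = a := by
  simp [G.π_two]

lemma teich_add_two_mul_teich_eq_iff {a b a' b' : K} :
    G.teich a + 2 * G.teich b = G.teich a' + 2 * G.teich b' ↔ a = a' ∧ b = b' := by
  refine ⟨fun h ↦ ?_, fun ⟨ha, hb⟩ ↦ ha ▸ hb ▸ rfl⟩
  obtain rfl : a = a' := by simpa using congrArg G.π h
  have hb : 2 * (G.teich b - G.teich b') = 0 := by linear_combination h
  simpa [sub_eq_zero] using (G.two_mul_eq_zero_iff _).1 hb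

lemma teich_sq_add_teich_sq (a b : K) :
    G.teich (a ^ 2) + G.teich (b ^ 2) = G.teich ((a + b) ^ 2) + 2 * G.teich (a * b) := by
  have hsq := G.sq_eq_of_π_eq (x := G.teich a + G.teich b) (y := G.teich (a + b)) (by simp)
  simp only [pow_two, G.teich_mul] at hsq ⊢
  linear_combination hsq - G.teich a * G.teich b * G.four_eq_zero

lemma teich_sq_add_sub_sub (x y z w : K) :
    G.teich (x ^ 2) + G.teich (y ^ 2) - G.teich (z ^ 2) - G.teich (w ^ 2) =
      G.teich ((x + y + z + w) ^ 2) + 2 * G.teich (teichCarry x y z w) := by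
  have hxy := G.teich_sq_add_teich_sq x y
  have hzw := G.teich_sq_add_teich_sq z w
  have hs := G.teich_sq_add_teich_sq (x + y) (z + w)
  rw [← add_assoc] at hs
  simp only [teichCarry, G.two_mul_teich_add]
  linear_combination hxy - hzw + hs - (G.teich ((z + w) ^ 2) + G.teich (z * w)) * G.four_eq_zero

theorem card_teich_add_add_sub_sub_eq (G : GaloisRingData R K) (C : R) :
    Nat.card {t : R × R × R × R // t.1 ^ Fintype.card K = t.1 ∧
      t.2.1 ^ Fintype.card K = t.2.1 ∧ t.2.2.1 ^ Fintype.card K = t.2.2.1 ∧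
      t.2.2.2 ^ Fintype.card K = t.2.2.2 ∧ t.1 + t.2.1 - t.2.2.1 - t.2.2.2 = C} =
    if C = 0 then (2 * Fintype.card K - 1) * Fintype.card K
    else if ∃ x : R, C = 2 * x then (Fintype.card K - 1) * Fintype.card K
    else Fintype.card K * Fintype.card K := by
  have := G.charP_two
  obtain ⟨c, b, rfl⟩ : ∃ c b : K, C = G.teich (c ^ 2) + 2 * G.teich b := by
    obtain ⟨c, hc⟩ := (frobeniusEquiv K 2).surjective (G.π C)
    obtain ⟨b, hb⟩ := G.exists_eq_teich_add_two_mul_teich C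
    exact ⟨c, b, by rwa [← hc] at hb⟩
  have hzero : G.teich (c ^ 2) + 2 * G.teich b = 0 ↔ c = 0 ∧ b = 0 := by
    have h0 : (0 : R) = G.teich (0 ^ 2) + 2 * G.teich 0 := by simp [G.teich_zero]
    rw [h0, G.teich_add_two_mul_teich_eq_iff, CharTwo.sq_inj]
  have htwo : (∃ x, G.teich (c ^ 2) + 2 * G.teich b = 2 * x) ↔ c = 0 := by
    rw [← G.π_eq_zero_iff, G.π_teich_add_two_mul_teich, pow_eq_zero_iff two_ne_zero]
  rw [card_quadruple_subtype_eq ((frobeniusEquiv K 2).toEquiv.trans G.teichEquiv)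
    (fun x y z w ↦ x + y - z - w = G.teich (c ^ 2) + 2 * G.teich b)]
  simp only [Equiv.trans_apply, RingEquiv.toEquiv_eq_coe, RingEquiv.coe_toEquiv,
    teichEquiv_apply_coe, frobeniusEquiv_apply, frobenius_def, G.teich_sq_add_sub_sub,
    G.teich_add_two_mul_teich_eq_iff, CharTwo.sq_inj, hzero, htwo]
  by_cases hc : c = 0
  · subst hc
    have hq := Fintype.card_pos (α := K)
    rw [card_teichCarry_eq_of_sum_eq_zero, card_sq_add_mul_eq]
    by_cases hb : b = 0
    · simp only [hb, and_self, if_true]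
      congr 1
      omega
    · simp [hb]
  · rw [card_teichCarry_eq_of_sum_ne_zero hc]
    simp [hc]

end GaloisRingData

lemma Module.Basis.exists_eq_smul_of_smul_eq_zero {ι A M : Type*} [Finite ι] [CommRing A]
    [AddCommGroup M] [Module A M] (b : Module.Basis ι A M) {a : A}
    (ha : ∀ c : A, a * c = 0 → ∃ d, c = a * d) {x : M} (hx : a • x = 0) : ∃ y, x = a • y := by
  have hc (i : ι) : a * b.equivFun x i = 0 := by
    simpa using congrFun (congrArg b.equivFun hx) i
  choose d hd using fun i ↦ ha _ (hc i)
  refine ⟨b.equivFun.symm d, b.equivFun.injective (funext fun i ↦ ?_)⟩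
  simp [hd i]

lemma Polynomial.Monic.natCard_adjoinRoot {A : Type*} [CommRing A] {g : A[X]} (hg : g.Monic) :
    Nat.card (AdjoinRoot g) = Nat.card A ^ g.natDegree := by
  rw [Nat.card_congr (AdjoinRoot.powerBasis' hg).basis.equivFun.toEquiv, Nat.card_fun,
    Nat.card_fin, AdjoinRoot.powerBasis'_dim]

namespace AdjoinRoot

variable {A B : Type*} [CommRing A] [CommRing B] {φ : A →+* B}

lemma map_mk (p : A[X]) (q : B[X]) (h : q ∣ p.map φ) (g : A[X]) :
    map φ p q h (mk p g) = mk q (g.map φ) := by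
  rw [map, lift_mk, ← eval₂_map, ← algebraMap_eq, ← aeval_def, aeval_eq]

lemma map_surjective (hφ : Function.Surjective φ) (p : A[X]) (q : B[X]) (h : q ∣ p.map φ) :
    Function.Surjective (map φ p q h) := by
  intro y
  obtain ⟨g, rfl⟩ := mk_surjective y
  obtain ⟨g, rfl⟩ := Polynomial.map_surjective φ hφ g
  exact ⟨mk p g, map_mk p q h g⟩

lemma map_eq_zero_iff (hφ : Function.Surjective φ) (p : A[X]) (x : AdjoinRoot p) :
    map φ p (p.map φ) dvd_rfl x = 0 ↔ x ∈ (RingHom.ker φ).map (of p) := by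
  refine ⟨fun hx ↦ ?_, fun hx ↦
    RingHom.mem_ker.1 (Ideal.map_le_iff_le_comap.2 (fun a ha ↦ ?_) hx)⟩
  · obtain ⟨g, rfl⟩ := mk_surjective x
    rw [map_mk, mk_eq_zero] at hx
    obtain ⟨h, hh⟩ := hx
    obtain ⟨h, rfl⟩ := Polynomial.map_surjective φ hφ h
    have hker : g - p * h ∈ RingHom.ker (mapRingHom φ) := by
      simp [Polynomial.map_sub, Polynomial.map_mul, hh]
    rw [ker_mapRingHom] at hker
    have := Ideal.mem_map_of_mem (mk p) hker
    rwa [Ideal.map_map, map_sub, map_mul, mk_self, zero_mul, sub_zero] at this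
  · simp [RingHom.mem_ker.1 ha]

end AdjoinRoot

local notation "ρ" => ZMod.castHom (show (2 : ℕ) ∣ 4 by norm_num) (ZMod 2)

lemma ZMod.ker_castHom_four_two : RingHom.ker ρ = Ideal.span {2} := by
  ext a
  rw [RingHom.mem_ker, Ideal.mem_span_singleton']
  revert a
  decide

namespace AdjoinRoot

variable {f : (ZMod 4)[X]}

lemma map_castHom_eq_zero_iff (x : AdjoinRoot f) :
    map ρ f (f.map ρ) dvd_rfl x = 0 ↔ ∃ y, x = 2 * y := by
  rw [map_eq_zero_iff (ZMod.castHom_surjective _), ZMod.ker_castHom_four_two, Ideal.map_span,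
    Set.image_singleton, map_ofNat, Ideal.mem_span_singleton']
  simp_rw [eq_comm, mul_comm]

lemma two_mul_eq_zero_iff (hf : f.Monic) (x : AdjoinRoot f) : 2 * x = 0 ↔ ∃ y, x = 2 * y := by
  have h4 : (4 : AdjoinRoot f) = 0 := by
    rw [← map_ofNat (of f) 4, show (4 : ZMod 4) = 0 by decide, map_zero]
  refine ⟨fun hx ↦ ?_, fun ⟨y, hy⟩ ↦ by linear_combination 2 * hy + y * h4⟩
  have ann_two : ∀ c : ZMod 4, 2 * c = 0 → ∃ d, c = 2 * d := by decide
  obtain ⟨y, hy⟩ := (powerBasis' hf).basis.exists_eq_smul_of_smul_eq_zero ann_two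
    (by rwa [Algebra.smul_def, map_ofNat])
  exact ⟨y, by rwa [Algebra.smul_def, map_ofNat] at hy⟩

noncomputable def galoisRingData (hf : f.Monic) [Fact (Irreducible (f.map ρ))] :
    GaloisRingData (AdjoinRoot f) (AdjoinRoot (f.map ρ)) where
  π := map ρ f (f.map ρ) dvd_rfl
  π_surjective := map_surjective (ZMod.castHom_surjective _) f _ _
  π_eq_zero_iff := map_castHom_eq_zero_iff
  two_mul_eq_zero_iff x := by rw [two_mul_eq_zero_iff hf, map_castHom_eq_zero_iff]

end AdjoinRoot

/-- With `R = GR(4,m)` realized as `(ℤ/4ℤ)[x]/(f)` and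
`𝒯 = {z : z ^ 2^m = z}` the Teichmüller set (`m` odd), for every `C ∈ R` the number of
quadruples `(X,Y,Z,W) ∈ 𝒯⁴` with `X + Y - Z - W = C` equals `(2^(m+1) - 1)·2^m` if `C = 0`,
`(2^m - 1)·2^m` if `C ∈ 2R ∖ {0}`, and `2^(2m)` if `C ∉ 2R`. -/
theorem statement7 (m : ℕ)
    (f : Polynomial (ZMod 4)) (hmonic : f.Monic) (hdeg : f.natDegree = m)
    (hirr : Irreducible (f.map (ZMod.castHom (show (2:ℕ) ∣ 4 by norm_num) (ZMod 2))))
    (C : AdjoinRoot f) :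
    Nat.card {t : AdjoinRoot f × AdjoinRoot f × AdjoinRoot f × AdjoinRoot f //
        t.1 ^ 2 ^ m = t.1 ∧ t.2.1 ^ 2 ^ m = t.2.1 ∧ t.2.2.1 ^ 2 ^ m = t.2.2.1 ∧
        t.2.2.2 ^ 2 ^ m = t.2.2.2 ∧
        t.1 + t.2.1 - t.2.2.1 - t.2.2.2 = C} =
      if C = 0 then (2 ^ (m + 1) - 1) * 2 ^ m
      else if ∃ x : AdjoinRoot f, C = 2 * x then (2 ^ m - 1) * 2 ^ m
      else 2 ^ (2 * m) := by
  have : Fact (Irreducible (f.map ρ)) := ⟨hirr⟩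
  have hcard : Nat.card (AdjoinRoot (f.map ρ)) = 2 ^ m := by
    rw [(hmonic.map _).natCard_adjoinRoot, Nat.card_zmod, hmonic.natDegree_map, hdeg]
  have : Finite (AdjoinRoot (f.map ρ)) := Nat.finite_of_card_ne_zero (by rw [hcard]; positivity)
  let : Fintype (AdjoinRoot (f.map ρ)) := Fintype.ofFinite _
  have hq : Fintype.card (AdjoinRoot (f.map ρ)) = 2 ^ m := by
    rw [← Nat.card_eq_fintype_card, hcard]
  have h := (AdjoinRoot.galoisRingData hmonic).card_teich_add_add_sub_sub_eq C
  rw [hq] at h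
  rw [h, pow_succ', two_mul m, pow_add]
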